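/- Fix a finite discrete interval Λ ⊂ ℤ, z ∈ ℂ, and constants F, ξ, θ > 0, and suppose that E(‖P_-^{A'} R_z^Λ P_+^{B'}‖^{1/4}) ≤ F |Λ|^{ξ} e^{−θ · dist_Λ(A', B'^c)} holds for all A' ⊂ B' ⊂ Λ with A' connected in Λ. Then for all A ⊂ B ⊂ Λ with A not necessarily connected in Λ, one has E(‖P_-^{A} R_z^Λ P_+^{B}‖^{1/4}) ≤ F · Υ_A^Λ · |Λ|^{ξ} e^{−θ · dist_Λ(A, B^c)}, where Υ_A^Λ is the number of connected components of A in Λ. -/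

import Mathlib

open scoped BigOperators ENNReal
open MeasureTheory

noncomputable section

namespace XXZ

/-- A (finite) discrete interval: a set of integers closed under betweenness. -/
def IsInterval (A : Finset ℤ) : Prop :=
  ∀ x ∈ A, ∀ y ∈ A, ∀ z : ℤ, x ≤ z → z ≤ y → z ∈ A

/-- distance between two finite subsets of ℤ (junk value 0 if one is empty). -/
def fdist (A B : Finset ℤ) : ℝ :=
  sInf ((fun p : ℤ × ℤ => |(p.1 : ℝ) - (p.2 : ℝ)|) '' ↑(A ×ˢ B))

/-- `[M]_s^Λ`, the `s`-neighborhood of `M` inside `Λ`. -/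
def thick (Λ M : Finset ℤ) (s : ℕ) : Finset ℤ :=
  Λ.filter fun x => ∃ y ∈ M, (x - y).natAbs ≤ s

/-- `[M]_{-s}^Λ = {x ∈ M : dist(x, Λ\M) > s}`. -/
def innerThick (Λ M : Finset ℤ) (s : ℕ) : Finset ℤ :=
  M.filter fun x => ∀ y ∈ Λ \ M, (s : ℤ) < |x - y|

/-- `∂_s^Λ M = [M]_s^Λ \ [M]_{-s}^Λ`. -/
def bdry (Λ M : Finset ℤ) (s : ℕ) : Finset ℤ := thick Λ M s \ innerThick Λ M s

/-- number of connected components of `A` (as a subset of an interval `Λ ⊆ ℤ`). -/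
def numComponents (A : Finset ℤ) : ℕ := (A.filter fun x => x - 1 ∉ A).card

/-- spin configurations over `Λ`; `true` at a site means a particle (spin down). -/
abbrev Cfg (Λ : Finset ℤ) := (↥Λ) → Bool

/-- the Hilbert space `⨂_{i∈Λ} ℂ²`, realized as `ℓ²` of configurations. -/
abbrev HS (Λ : Finset ℤ) := EuclideanSpace ℂ (Cfg Λ)

abbrev Op (Λ : Finset ℤ) := HS Λ →L[ℂ] HS Λ

abbrev Mat (Λ : Finset ℤ) := Matrix (Cfg Λ) (Cfg Λ) ℂ

variable (Λ : Finset ℤ)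

def toOp (M : Mat Λ) : Op Λ := Matrix.toEuclideanCLM (𝕜 := ℂ) M

def toMat (T : Op Λ) : Mat Λ := (Matrix.toEuclideanCLM (𝕜 := ℂ)).symm T

/-- the local number operator `𝒩_i` (the copy of `½(1−σ^z)` at site `i`). -/
def NMat (i : ℤ) : Mat Λ :=
  Matrix.diagonal fun σ => if h : i ∈ Λ then (if σ ⟨i, h⟩ then 1 else 0) else 0

def NOp (i : ℤ) : Op Λ := toOp Λ (NMat Λ i)

/-- `P_+^S`: orthogonal projection onto states with no particles in `S`. -/
def PplusMat (S : Finset ℤ) : Mat Λ :=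
  Matrix.diagonal fun σ => if ∀ i : ↥Λ, (i : ℤ) ∈ S → σ i = false then 1 else 0

def Pplus (S : Finset ℤ) : Op Λ := toOp Λ (PplusMat Λ S)

/-- `P_-^S = 1 - P_+^S`. -/
def Pminus (S : Finset ℤ) : Op Λ := 1 - Pplus Λ S

/-- the configuration with the values at `i` and `i+1` exchanged. -/
def swapCfg (i : ℤ) (σ : Cfg Λ) : Cfg Λ := fun j =>
  if (j : ℤ) = i then (if h : i + 1 ∈ Λ then σ ⟨i + 1, h⟩ else σ j)
  else if (j : ℤ) = i + 1 then (if h : i ∈ Λ then σ ⟨i, h⟩ else σ j)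
  else σ j

/-- the hopping term `σ_i^+σ_{i+1}^- + σ_i^-σ_{i+1}^+`. -/
def hopMat (i : ℤ) : Mat Λ := fun σ τ =>
  if hi : i ∈ Λ then
    if hi1 : i + 1 ∈ Λ then
      (if τ ⟨i, hi⟩ ≠ τ ⟨i + 1, hi1⟩ ∧ σ = swapCfg Λ i τ then 1 else 0)
    else 0
  else 0

/-- `h_{i,i+1} = -𝒩_i 𝒩_{i+1} - (2Δ)⁻¹ (σ_i^+σ_{i+1}^- + σ_i^-σ_{i+1}^+)`. -/
def hMat (Δ : ℝ) (i : ℤ) : Mat Λ :=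
  -(NMat Λ i * NMat Λ (i + 1)) - ((2 * Δ : ℂ))⁻¹ • hopMat Λ i

/-- the XXZ Hamiltonian on a subset `S ⊆ Λ`, acting on `H_Λ`:
`Σ_{{i,i+1}⊆S} h_{i,i+1} + Σ_{i∈S} 𝒩_i + λ Σ_{i∈S} ω_i 𝒩_i`. -/
def HonMat (Δ lam : ℝ) (ω : ℤ → ℝ) (S : Finset ℤ) : Mat Λ :=
  (∑ i ∈ S.filter (fun i => i + 1 ∈ S), hMat Λ Δ i)
    + (∑ i ∈ S, NMat Λ i)
    + (lam : ℂ) • (∑ i ∈ S, (ω i : ℂ) • NMat Λ i)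

/-- the random XXZ Hamiltonian `H^Λ = H_0^Λ + λ Σ_{i∈Λ} ω_i 𝒩_i`. -/
def HOp (Δ lam : ℝ) (ω : ℤ → ℝ) : Op Λ := toOp Λ (HonMat Λ Δ lam ω Λ)

/-- the free Hamiltonian `H_0^Λ`. -/
def H0Op (Δ : ℝ) : Op Λ :=
  toOp Λ ((∑ i ∈ Λ.filter (fun i => i + 1 ∈ Λ), hMat Λ Δ i) + ∑ i ∈ Λ, NMat Λ i)

/-- the decoupled Hamiltonian `H^{A,A^c} = H^A + H^{A^c}` on `H_Λ`. -/
def HdecOp (Δ lam : ℝ) (ω : ℤ → ℝ) (A : Finset ℤ) : Op Λ :=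
  toOp Λ (HonMat Λ Δ lam ω A + HonMat Λ Δ lam ω (Λ \ A))

/-- the number-of-clusters operator `W^Λ = 𝒩^Λ - Σ 𝒩_i 𝒩_{i+1}`. -/
def WOp : Op Λ :=
  toOp Λ ((∑ i ∈ Λ, NMat Λ i)
    - ∑ i ∈ Λ.filter (fun i => i + 1 ∈ Λ), NMat Λ i * NMat Λ (i + 1))

/-- total number operator `𝒩^Λ`. -/
def NtotOp : Op Λ := toOp Λ (∑ i ∈ Λ, NMat Λ i)

/-- spectral projection `χ_I(T)` (via the continuous functional calculus;
for a self-adjoint `T` the spectrum is finite, so every function is continuous on it). -/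
def specProj (T : Op Λ) (I : Set ℝ) : Op Λ :=
  cfc (fun x : ℝ => I.indicator (fun _ => (1 : ℝ)) x) T

/-- `f(T)` for a real-valued (Borel) function `f`. -/
def opFun (T : Op Λ) (f : ℝ → ℝ) : Op Λ := cfc f T

/-- resolvent `(T - z)⁻¹` (junk value `0` when not invertible). -/
def res (T : Op Λ) (z : ℂ) : Op Λ := Ring.inverse (T - z • 1)

/-- the unitary `e^{itT}`. -/
def uexp (T : Op Λ) (t : ℝ) : Op Λ := (NormedSpace.expSeries ℂ (Op Λ)).sum ((Complex.I * (t : ℂ)) • T)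

/-- Heisenberg evolution `τ_t(T) = e^{itH} T e^{-itH}`. -/
def heis (H : Op Λ) (t : ℝ) (T : Op Λ) : Op Λ := uexp Λ H t * T * uexp Λ H (-t)

/-- the deformed Hamiltonian `Ĥ_k^Λ`. -/
def Hhat (Δ lam : ℝ) (ω : ℤ → ℝ) (k : ℕ) : Op Λ :=
  if k = 0 then HOp Λ Δ lam ω + ((1 - 1 / Δ : ℝ) : ℂ) • specProj Λ (WOp Λ) {0}
  else HOp Λ Δ lam ω + ((k * (1 - 1 / Δ) : ℝ) : ℂ) •
    (specProj Λ (WOp Λ) (Set.Icc 1 k)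
      + (((k + 1 : ℝ) / k : ℝ) : ℂ) • specProj Λ (WOp Λ) {0})

/-- support predicate, on matrices: `M` acts as `M_A ⊗ I_{A^c}`. -/
def MatSupportedOn (M : Mat Λ) (A : Finset ℤ) : Prop :=
  (∀ σ τ : Cfg Λ, M σ τ ≠ 0 → ∀ i : ↥Λ, (i : ℤ) ∉ A → σ i = τ i) ∧
  (∀ σ τ σ' τ' : Cfg Λ,
    (∀ i : ↥Λ, (i : ℤ) ∈ A → (σ i = σ' i ∧ τ i = τ' i)) →
    (∀ i : ↥Λ, (i : ℤ) ∉ A → (σ i = τ i ∧ σ' i = τ' i)) → M σ τ = M σ' τ')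

/-- an observable on `H_Λ` is supported on `A ⊆ Λ` if it has the form `T_A ⊗ I`. -/
def SupportedOn (T : Op Λ) (A : Finset ℤ) : Prop := MatSupportedOn Λ (toMat Λ T) A

/-- the rank-one projection `π_M` onto the canonical basis vector `φ_M`. -/
def piProj (M : Finset ℤ) : Op Λ :=
  toOp Λ (Matrix.diagonal fun σ => if σ = (fun i : ↥Λ => decide ((i : ℤ) ∈ M)) then 1 else 0)

/-- the all-spins-up vacuum vector `Ω_Λ`. -/
def vac : HS Λ := EuclideanSpace.single (fun _ => false) 1

/-- extension of a field on `Λ` to `ℤ` by zero. -/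
def extend (ω : ↥Λ → ℝ) : ℤ → ℝ := fun i => if h : i ∈ Λ then ω ⟨i, h⟩ else 0

/-- expectation with respect to the i.i.d. field `{ω_i}_{i∈Λ}` with single-site measure `μ`. -/
def expec (μ : Measure ℝ) (F : (ℤ → ℝ) → ℝ) : ℝ :=
  ∫ ω : ↥Λ → ℝ, F (extend Λ ω) ∂(Measure.pi fun _ => μ)

/-- Borel functions vanishing outside `J` and bounded by `1`. -/
def B1 (J : Set ℝ) : Set (ℝ → ℝ) :=
  {f | Measurable f ∧ (∀ x, x ∉ J → f x = 0) ∧ ∀ x, |f x| ≤ 1}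

/-- `⟨t⟩ = (1+t²)^{1/2}`. -/
def jap (t : ℝ) : ℝ := Real.sqrt (1 + t ^ 2)

/-- the assumptions on the single-site distribution `μ`: a probability measure,
absolutely continuous with bounded density, with `{0,1} ⊆ supp μ ⊆ [0,1]`. -/
structure SingleSite (μ : Measure ℝ) : Prop where
  prob : IsProbabilityMeasure μ
  ac : μ ≪ volume
  bounded : ∃ C : ℝ≥0∞, C ≠ ⊤ ∧ ∀ᵐ x ∂volume, μ.rnDeriv volume x ≤ C
  supp_sub : μ (Set.Icc 0 1) = 1
  zero_mem : ∀ ε > 0, 0 < μ (Set.Ioo (-ε) ε)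
  one_mem : ∀ ε > 0, 0 < μ (Set.Ioo (1 - ε) (1 + ε))

/-- Condition `L_r`: quasi-locality (localization) on the energy interval
`Ǐ_{≤r} = (-∞, (r+7/8)(1-1/Δ)]`, with constants `ξ_r, θ_r` (and some `F_r`). -/
def ConditionL (μ : Measure ℝ) (Δ₀ lam0 Δ lam r ξ θ : ℝ) : Prop :=
  Δ₀ ≤ Δ ∧ lam0 ≤ lam ∧ 0 < ξ ∧ 0 < θ ∧
  ∃ F : ℝ, 0 < F ∧
    ∀ Λ : Finset ℤ, Λ.Nonempty → IsInterval Λ →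
    ∀ A B : Finset ℤ, A ⊆ B → B ⊆ Λ → IsInterval A →
      (expec Λ μ (fun ω =>
          ⨆ f ∈ B1 (Set.Iic ((r + 7 / 8) * (1 - 1 / Δ))),
            ‖Pminus Λ A * opFun Λ (HOp Λ Δ lam ω) f * Pplus Λ B‖)
        ≤ F * (Λ.card : ℝ) ^ ξ * Real.exp (-θ * fdist A (Λ \ B))) ∧
      ∀ z : ℂ, z.re ≤ (r + 7 / 8) * (1 - 1 / Δ) →
        expec Λ μ (fun ω =>
            ‖Pminus Λ A * res Λ (HOp Λ Δ lam ω) z * Pplus Λ B‖ ^ ((1 : ℝ) / 4))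
          ≤ F * (Λ.card : ℝ) ^ ξ * Real.exp (-θ * fdist A (Λ \ B))

/-- `β_{n/2}`:  `β_0 = 0`,  `β_q = β_{q-1/2} + 9⌈q⌉ + 13`. -/
def betaN : ℕ → ℕ
  | 0 => 0
  | n + 1 => betaN n + 9 * ((n + 2) / 2) + 13

end XXZ

/-!
Split `A` into its leftmost connected component `A₁` and the rest `A₂`. Since
`P_-^{A₁ ∪ A₂} = P_-^{A₁} + P_+^{A₁} P_-^{A₂}` and `P_+^{A₁}` is an orthogonal projection,
`‖P_-^A X‖ ≤ ‖P_-^{A₁} X‖ + ‖P_-^{A₂} X‖`; as `s ↦ s^{1/4}` is subadditive, the fractional moment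
for `A` is at most the sum of those for `A₁` and `A₂`. By induction it is at most the sum over the
components of `A`, and each of these is bounded by the hypothesis, because a component of `A` is
at least as far from `Λ \ B` as `A` is.
-/

theorem IsStarProjection.norm_mul_le {E : Type*} [NonUnitalNormedRing E] [StarRing E]
    [CStarRing E] {p : E} (hp : IsStarProjection p) (x : E) : ‖p * x‖ ≤ ‖x‖ :=
  (norm_mul_le_of_le (hp.norm_le p) le_rfl).trans_eq (one_mul _)

theorem measurable_ring_inverse {R : Type*} [NormedRing R] [HasSummableGeomSeries R]
    [MeasurableSpace R] [BorelSpace R] : Measurable (Ring.inverse : R → R) := by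
  classical
  have hcont : ContinuousOn (Ring.inverse : R → R) {x | IsUnit x} := fun x hx =>
    (NormedRing.inverse_continuousAt hx.unit).continuousWithinAt
  have hpiece : (Ring.inverse : R → R) = Set.piecewise {x | IsUnit x} Ring.inverse 0 := by
    ext1 x
    by_cases hx : IsUnit x <;> simp [hx, Ring.inverse_non_unit]
  rw [hpiece]
  exact hcont.measurable_piecewise continuousOn_const Units.isOpen.measurableSet

theorem integral_le_add_of_le_add {α : Type*} [MeasurableSpace α] {μ : Measure α}
    {f g h : α → ℝ} (hg : AEStronglyMeasurable g μ) (hh : AEStronglyMeasurable h μ)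
    (hg0 : 0 ≤ g) (hh0 : 0 ≤ h) (hgf : g ≤ f) (hhf : h ≤ f) (hfgh : f ≤ g + h) :
    ∫ x, f x ∂μ ≤ ∫ x, g x ∂μ + ∫ x, h x ∂μ := by
  by_cases hf : Integrable f μ
  · have hle {k : α → ℝ} (hk : AEStronglyMeasurable k μ) (hk0 : 0 ≤ k) (hkf : k ≤ f) :
        Integrable k μ :=
      hf.mono hk (ae_of_all _ fun x => by
        simpa [abs_of_nonneg (hk0 x), abs_of_nonneg ((hk0 x).trans (hkf x))] using hkf x)
    have hgi := hle hg hg0 hgf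
    have hhi := hle hh hh0 hhf
    rw [← integral_add hgi hhi]
    exact integral_mono hf (hgi.add hhi) hfgh
  · rw [integral_undef hf]
    exact add_nonneg (integral_nonneg hg0) (integral_nonneg hh0)

namespace XXZ

section Projections

variable {Λ : Finset ℤ}

lemma PplusMat_union (S T : Finset ℤ) :
    PplusMat Λ (S ∪ T) = PplusMat Λ S * PplusMat Λ T := by
  simp only [PplusMat, Matrix.diagonal_mul_diagonal, Finset.mem_union, or_imp, forall_and]
  congr 1
  ext σ
  split_ifs <;> simp_all

lemma Pplus_union (S T : Finset ℤ) : Pplus Λ (S ∪ T) = Pplus Λ S * Pplus Λ T := by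
  rw [Pplus, Pplus, Pplus, toOp, toOp, toOp, PplusMat_union, map_mul]

lemma Pminus_empty : Pminus Λ ∅ = 0 := by
  have : PplusMat Λ ∅ = 1 := by simp [PplusMat]
  rw [Pminus, Pplus, this, toOp, map_one, sub_self]

lemma isStarProjection_Pplus (S : Finset ℤ) : IsStarProjection (Pplus Λ S) := by
  refine IsStarProjection.map ⟨?_, ?_⟩ (Matrix.toEuclideanCLM (𝕜 := ℂ) (n := Cfg Λ))
  · rw [IsIdempotentElem, ← PplusMat_union, Finset.union_self]
  · simp [PplusMat, IsSelfAdjoint, Matrix.star_eq_conjTranspose, apply_ite (star : ℂ → ℂ)]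

lemma isStarProjection_Pminus (S : Finset ℤ) : IsStarProjection (Pminus Λ S) :=
  (isStarProjection_Pplus S).one_sub

lemma Pminus_mul_Pminus_of_subset {S T : Finset ℤ} (h : S ⊆ T) :
    Pminus Λ S * Pminus Λ T = Pminus Λ S := by
  have : Pplus Λ S * Pplus Λ T = Pplus Λ T := by
    rw [← Pplus_union, Finset.union_eq_right.mpr h]
  simp only [Pminus, sub_mul, mul_sub, one_mul, mul_one, this]
  abel

lemma Pminus_union (S T : Finset ℤ) :
    Pminus Λ (S ∪ T) = Pminus Λ S + Pplus Λ S * Pminus Λ T := by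
  simp only [Pminus, Pplus_union, mul_sub, mul_one]
  abel

lemma norm_Pminus_mul_le_of_subset {S T : Finset ℤ} (h : S ⊆ T) (X : Op Λ) :
    ‖Pminus Λ S * X‖ ≤ ‖Pminus Λ T * X‖ :=
  calc ‖Pminus Λ S * X‖ = ‖Pminus Λ S * (Pminus Λ T * X)‖ := by
        rw [← mul_assoc, Pminus_mul_Pminus_of_subset h]
    _ ≤ ‖Pminus Λ T * X‖ := (isStarProjection_Pminus S).norm_mul_le _

lemma norm_Pminus_union_mul_le (S T : Finset ℤ) (X : Op Λ) :
    ‖Pminus Λ (S ∪ T) * X‖ ≤ ‖Pminus Λ S * X‖ + ‖Pminus Λ T * X‖ :=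
  calc ‖Pminus Λ (S ∪ T) * X‖ = ‖Pminus Λ S * X + Pplus Λ S * (Pminus Λ T * X)‖ := by
        rw [Pminus_union, add_mul, mul_assoc]
    _ ≤ ‖Pminus Λ S * X‖ + ‖Pminus Λ T * X‖ :=
        (norm_add_le _ _).trans (add_le_add le_rfl ((isStarProjection_Pplus S).norm_mul_le _))

end Projections

section Disorder

variable {Λ : Finset ℤ}

lemma continuous_HOp_extend (Δ lam : ℝ) :
    Continuous fun ω : ↥Λ → ℝ => HOp Λ Δ lam (extend Λ ω) := by
  have htoOp : Continuous (toOp Λ) :=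
    (Matrix.toEuclideanCLM (𝕜 := ℂ) (n := Cfg Λ)).toAlgEquiv.toLinearMap
      |>.continuous_of_finiteDimensional
  have hext (i : ℤ) : Continuous fun ω : ↥Λ → ℝ => extend Λ ω i := by
    unfold extend
    split_ifs
    exacts [continuous_apply _, continuous_const]
  refine htoOp.comp ?_
  unfold HonMat
  fun_prop

lemma measurable_res_HOp_extend (Δ lam : ℝ) (z : ℂ) :
    Measurable fun ω : ↥Λ → ℝ => res Λ (HOp Λ Δ lam (extend Λ ω)) z :=
  measurable_ring_inverse.comp ((continuous_HOp_extend Δ lam).sub continuous_const).measurable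

lemma expec_norm_Pminus_union_mul_rpow_le (μ : Measure ℝ) {p : ℝ} (hp0 : 0 ≤ p) (hp1 : p ≤ 1)
    {X : (ℤ → ℝ) → Op Λ} (hX : Measurable fun ω : ↥Λ → ℝ => X (extend Λ ω)) (S T : Finset ℤ) :
    expec Λ μ (fun ω => ‖Pminus Λ (S ∪ T) * X ω‖ ^ p)
      ≤ expec Λ μ (fun ω => ‖Pminus Λ S * X ω‖ ^ p)
        + expec Λ μ (fun ω => ‖Pminus Λ T * X ω‖ ^ p) := by
  have hmeas (U : Finset ℤ) :
      Measurable fun ω : ↥Λ → ℝ => ‖Pminus Λ U * X (extend Λ ω)‖ ^ p :=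
    ((Real.continuous_rpow_const hp0).comp
      (continuous_const.mul continuous_id).norm).measurable.comp hX
  have hmono {U : Finset ℤ} (hU : U ⊆ S ∪ T) (ω : ↥Λ → ℝ) :
      ‖Pminus Λ U * X (extend Λ ω)‖ ^ p ≤ ‖Pminus Λ (S ∪ T) * X (extend Λ ω)‖ ^ p :=
    Real.rpow_le_rpow (norm_nonneg _) (norm_Pminus_mul_le_of_subset hU _) hp0
  refine integral_le_add_of_le_add (hmeas S).aestronglyMeasurable (hmeas T).aestronglyMeasurable
    (fun ω => by positivity) (fun ω => by positivity)
    (hmono Finset.subset_union_left) (hmono Finset.subset_union_right) fun ω => ?_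
  exact (Real.rpow_le_rpow (norm_nonneg _) (norm_Pminus_union_mul_le S T _) hp0).trans
    (Real.rpow_add_le_add_rpow (norm_nonneg _) (norm_nonneg _) hp0 hp1)

end Disorder

section Components

lemma fdist_le_fdist_of_subset {A A' S : Finset ℤ} (hA' : A'.Nonempty) (h : A' ⊆ A) :
    fdist A S ≤ fdist A' S := by
  rcases S.eq_empty_or_nonempty with rfl | ⟨s, hs⟩
  · simp [fdist]
  obtain ⟨a, ha⟩ := hA'
  refine csInf_le_csInf ⟨0, ?_⟩ ⟨_, ⟨(a, s), by simp [ha, hs], rfl⟩⟩ ?_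
  · rintro r ⟨q, _, rfl⟩
    exact abs_nonneg _
  · exact Set.image_mono (Finset.coe_subset.2 (Finset.product_subset_product h subset_rfl))

lemma exists_isInterval_numComponents_sdiff {A : Finset ℤ} (hA : A.Nonempty) :
    ∃ A₁ ⊆ A, A₁.Nonempty ∧ IsInterval A₁ ∧ numComponents (A \ A₁) + 1 = numComponents A := by
  set a := A.min' hA
  have ha : a ∈ A := A.min'_mem hA
  have hmin : ∀ x ∈ A, a ≤ x := fun x hx => A.min'_le x hx
  set A₁ := A.filter fun x => Finset.Icc a x ⊆ A
  have mem_A₁ {x : ℤ} : x ∈ A₁ ↔ x ∈ A ∧ Finset.Icc a x ⊆ A := Finset.mem_filter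
  have ha₁ : a ∈ A₁ := mem_A₁.2 ⟨ha, by simpa using ha⟩
  have hpred {x : ℤ} (hx : x ∈ A₁) (hxa : x ≠ a) : x - 1 ∈ A := by
    obtain ⟨hxA, hIcc⟩ := mem_A₁.1 hx
    have := hmin x hxA
    exact hIcc (Finset.mem_Icc.2 ⟨by omega, by omega⟩)
  have hsucc {x : ℤ} (hx : x ∈ A) (hx₁ : x - 1 ∈ A₁) : x ∈ A₁ := by
    refine mem_A₁.2 ⟨hx, fun y hy => ?_⟩
    rcases eq_or_ne y x with rfl | hyx
    · exact hx
    · exact (mem_A₁.1 hx₁).2 (by simp only [Finset.mem_Icc] at hy ⊢; omega)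
  refine ⟨A₁, Finset.filter_subset _ _, ⟨a, ha₁⟩, ?_, ?_⟩
  · intro x hx y hy w hxw hwy
    have hw : w ∈ A := (mem_A₁.1 hy).2 (Finset.mem_Icc.2 ⟨(hmin x (mem_A₁.1 hx).1).trans hxw, hwy⟩)
    exact mem_A₁.2 ⟨hw, fun v hv => (mem_A₁.1 hy).2 (by simp only [Finset.mem_Icc] at hv ⊢; omega)⟩
  · have hstarts : A.filter (fun x => x - 1 ∉ A)
        = insert a ((A \ A₁).filter fun x => x - 1 ∉ A \ A₁) := by
      ext x
      simp only [Finset.mem_filter, Finset.mem_insert, Finset.mem_sdiff]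
      have hmin_pred := hmin (x - 1)
      grind
    rw [numComponents, numComponents, hstarts, Finset.card_insert_of_notMem (by simp [ha₁])]

theorem le_numComponents_mul_of_subadditive {Φ : Finset ℤ → ℝ} {c : ℝ} {C : Finset ℤ}
    (hempty : Φ ∅ ≤ 0) (hunion : ∀ S T, Φ (S ∪ T) ≤ Φ S + Φ T)
    (hinterval : ∀ A ⊆ C, A.Nonempty → IsInterval A → Φ A ≤ c) :
    Φ C ≤ numComponents C * c := by
  induction C using Finset.strongInduction with
  | H C ih =>
    rcases C.eq_empty_or_nonempty with rfl | hC
    · simpa [numComponents] using hempty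
    obtain ⟨A₁, hA₁C, hA₁, hA₁i, hcount⟩ := exists_isInterval_numComponents_sdiff hC
    have hrest : Φ (C \ A₁) ≤ numComponents (C \ A₁) * c :=
      ih _ (Finset.sdiff_ssubset hA₁C hA₁) fun A hA => hinterval A (hA.trans Finset.sdiff_subset)
    calc Φ C = Φ (A₁ ∪ C \ A₁) := by rw [Finset.union_sdiff_of_subset hA₁C]
      _ ≤ c + numComponents (C \ A₁) * c :=
        (hunion _ _).trans (add_le_add (hinterval A₁ hA₁C hA₁ hA₁i) hrest)
      _ = numComponents C * c := by rw [← hcount]; push_cast; ring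

end Components

theorem resolvent_quasi_locality_disconnected_general
    (μ : Measure ℝ) (Δ lam : ℝ)
    (Λ : Finset ℤ) (z : ℂ)
    (F ξ θ : ℝ) (hF : 0 < F) (hθ : 0 < θ)
    (h : ∀ A' B' : Finset ℤ, A' ⊆ B' → B' ⊆ Λ → IsInterval A' →
      expec Λ μ (fun ω =>
          ‖Pminus Λ A' * res Λ (HOp Λ Δ lam ω) z * Pplus Λ B'‖ ^ ((1 : ℝ) / 4))
        ≤ F * (Λ.card : ℝ) ^ ξ * Real.exp (-θ * fdist A' (Λ \ B'))) :
    ∀ A B : Finset ℤ, A ⊆ B → B ⊆ Λ →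
      expec Λ μ (fun ω =>
          ‖Pminus Λ A * res Λ (HOp Λ Δ lam ω) z * Pplus Λ B‖ ^ ((1 : ℝ) / 4))
        ≤ F * (numComponents A : ℝ) * (Λ.card : ℝ) ^ ξ
            * Real.exp (-θ * fdist A (Λ \ B)) := by
  intro A B hAB hBΛ
  set Φ : Finset ℤ → ℝ := fun S => expec Λ μ (fun ω =>
    ‖Pminus Λ S * res Λ (HOp Λ Δ lam ω) z * Pplus Λ B‖ ^ ((1 : ℝ) / 4))
  have hunion (S T : Finset ℤ) : Φ (S ∪ T) ≤ Φ S + Φ T := by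
    simpa only [Φ, mul_assoc] using
      expec_norm_Pminus_union_mul_rpow_le μ (by norm_num) (by norm_num)
        ((continuous_mul_const (Pplus Λ B)).measurable.comp (measurable_res_HOp_extend Δ lam z)) S T
  have hK : 0 ≤ F * (Λ.card : ℝ) ^ ξ := by positivity
  have hinterval (A' : Finset ℤ) (hA'A : A' ⊆ A) (hA' : A'.Nonempty) (hA'i : IsInterval A') :
      Φ A' ≤ F * (Λ.card : ℝ) ^ ξ * Real.exp (-θ * fdist A (Λ \ B)) :=
    (h A' B (hA'A.trans hAB) hBΛ hA'i).trans <| mul_le_mul_of_nonneg_left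
      (Real.exp_le_exp.2 (by nlinarith [fdist_le_fdist_of_subset (S := Λ \ B) hA' hA'A])) hK
  calc Φ A ≤ numComponents A * (F * (Λ.card : ℝ) ^ ξ * Real.exp (-θ * fdist A (Λ \ B))) :=
        le_numComponents_mul_of_subadditive (by simp [Φ, Pminus_empty, expec]) hunion hinterval
    _ = _ := by ring

/-- Remark 2.2: quasi-locality for disconnected `A`. -/
theorem resolvent_quasi_locality_disconnected
    (μ : Measure ℝ) (Δ lam : ℝ)
    (Λ : Finset ℤ) (hΛ : Λ.Nonempty) (hΛi : IsInterval Λ) (z : ℂ)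
    (F ξ θ : ℝ) (hF : 0 < F) (hξ : 0 < ξ) (hθ : 0 < θ)
    (h : ∀ A' B' : Finset ℤ, A' ⊆ B' → B' ⊆ Λ → IsInterval A' →
      expec Λ μ (fun ω =>
          ‖Pminus Λ A' * res Λ (HOp Λ Δ lam ω) z * Pplus Λ B'‖ ^ ((1 : ℝ) / 4))
        ≤ F * (Λ.card : ℝ) ^ ξ * Real.exp (-θ * fdist A' (Λ \ B'))) :
    ∀ A B : Finset ℤ, A ⊆ B → B ⊆ Λ →
      expec Λ μ (fun ω =>
          ‖Pminus Λ A * res Λ (HOp Λ Δ lam ω) z * Pplus Λ B‖ ^ ((1 : ℝ) / 4))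
        ≤ F * (numComponents A : ℝ) * (Λ.card : ℝ) ^ ξ
            * Real.exp (-θ * fdist A (Λ \ B)) :=
  resolvent_quasi_locality_disconnected_general μ Δ lam Λ z F ξ θ hF hθ h

end XXZ
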